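/- Let f : ℝ → ℂ be analytic with all derivatives defined, and let a ∈ ℝ. If the Taylor series ∑_{n≥0} (aⁿ/n!)·f^{(n)}(x) converges absolutely for all x (e.g. if ‖f‖(r, 0) < ∞ for some r > |a|), then ∑_{n≥0} (aⁿ/n!)·f^{(n)}(x) = f(x + a) for all x ∈ ℝ. -/

import Mathlib

/-!
The Taylor series `p` of `f` at `x` has radius of convergence at least `r > |a|` by the
summability hypothesis. Its sum `y ↦ p.sum (y - x)` is analytic on the ball of radius `r`
around `x` and agrees with `f` near `x`, since `f` is analytic at `x` and a power series
representation is unique. As the ball is connected, the identity theorem makes the two agree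
on the whole ball, in particular at `x + a`.
-/

open Nat

variable {𝕜 E : Type*}

noncomputable def taylorSeries [NontriviallyNormedField 𝕜] [NormedAddCommGroup E]
    [NormedSpace 𝕜 E] (f : 𝕜 → E) (x : 𝕜) : FormalMultilinearSeries 𝕜 𝕜 E :=
  fun n ↦ ContinuousMultilinearMap.mkPiRing 𝕜 (Fin n) ((n ! : 𝕜)⁻¹ • iteratedDeriv n f x)

section NontriviallyNormedField

variable [NontriviallyNormedField 𝕜] [NormedAddCommGroup E] [NormedSpace 𝕜 E]
  {f : 𝕜 → E} {x : 𝕜}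

theorem taylorSeries_apply_diag (n : ℕ) (y : 𝕜) :
    taylorSeries f x n (fun _ ↦ y) = (y ^ n * (n ! : 𝕜)⁻¹) • iteratedDeriv n f x := by
  simp [taylorSeries, ContinuousMultilinearMap.mkPiRing_apply, smul_smul]

theorem HasFPowerSeriesAt.eq_taylorSeries [CharZero 𝕜] [CompleteSpace E]
    {p : FormalMultilinearSeries 𝕜 𝕜 E} (hp : HasFPowerSeriesAt f p x) :
    p = taylorSeries f x := by
  obtain ⟨r, hr⟩ := hp
  ext n : 1
  rw [taylorSeries, ← p.mkPiRing_coeff_eq n, iteratedDeriv_eq_iteratedFDeriv,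
    ← hr.factorial_smul 1 n, ← Nat.cast_smul_eq_nsmul 𝕜, smul_smul,
    inv_mul_cancel₀ (by exact_mod_cast n.factorial_ne_zero), one_smul]
  rfl

theorem AnalyticAt.hasFPowerSeriesAt_taylorSeries [CharZero 𝕜] [CompleteSpace E]
    (h : AnalyticAt 𝕜 f x) : HasFPowerSeriesAt f (taylorSeries f x) x := by
  obtain ⟨p, hp⟩ := h
  exact hp.eq_taylorSeries ▸ hp

end NontriviallyNormedField

section RCLike

variable [RCLike 𝕜] [NormedAddCommGroup E] [NormedSpace 𝕜 E] {f : 𝕜 → E} {x : 𝕜}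

theorem norm_taylorSeries (n : ℕ) : ‖taylorSeries f x n‖ = ‖iteratedDeriv n f x‖ / n ! := by
  rw [taylorSeries, ContinuousMultilinearMap.norm_mkPiRing, norm_smul, norm_inv,
    RCLike.norm_natCast, inv_mul_eq_div]

/-- Over `ℝ` or `ℂ` balls are connected, so this is an instance of the identity theorem. It fails
over non-archimedean fields, e.g. for the indicator function of a ball. -/
theorem AnalyticOnNhd.hasFPowerSeriesOnBall_taylorSeries [CompleteSpace E] {r : ENNReal}
    (h : AnalyticOnNhd 𝕜 f (Metric.eball x r)) (hr : 0 < r)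
    (hrad : r ≤ (taylorSeries f x).radius) :
    HasFPowerSeriesOnBall f (taylorSeries f x) x r := by
  set p := taylorSeries f x
  have hsum : HasFPowerSeriesOnBall (fun y ↦ p.sum (y - x)) p x p.radius := by
    simpa using (p.hasFPowerSeriesOnBall (hr.trans_le hrad)).comp_sub x
  have hsum_analytic :
      AnalyticOnNhd 𝕜 (fun y ↦ p.sum (y - x)) (Metric.eball x p.radius) := by
    simpa using p.analyticOnNhd.comp_sub x
  have hlocal : f =ᶠ[nhds x] fun y ↦ p.sum (y - x) := by
    filter_upwards
      [(h x (Metric.mem_eball_self hr)).hasFPowerSeriesAt_taylorSeries.eventually_hasSum_sub]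
      with y hy using hy.tsum_eq.symm
  have heq : Set.EqOn f (fun y ↦ p.sum (y - x)) (Metric.eball x r) :=
    h.eqOn_of_preconnected_of_eventuallyEq (hsum_analytic.mono (Metric.eball_subset_eball hrad))
      (Metric.isConnected_eball hr).isPreconnected (Metric.mem_eball_self hr) hlocal
  exact (hsum.mono hr hrad).congr heq.symm

end RCLike

/-- Taylor shift identity `e^{a·d/dx} f = f(·+a)`: for an analytic function whose Taylor
series converges absolutely everywhere, `∑ₙ (aⁿ/n!) f⁽ⁿ⁾(x) = f(x+a)`. -/
theorem stmt_16 (f : ℝ → ℂ) (hf : AnalyticOn ℝ f Set.univ) (a : ℝ)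
    (hconv : ∃ r : ℝ, |a| < r ∧ ∀ x : ℝ,
      Summable fun n : ℕ => ‖iteratedDeriv n f x‖ * r ^ n / n.factorial) :
    ∀ x : ℝ, ∑' n : ℕ, ((a ^ n / n.factorial : ℝ) : ℂ) * iteratedDeriv n f x = f (x + a) := by
  obtain ⟨r, har, hsum⟩ := hconv
  have hr : 0 < r := (abs_nonneg a).trans_lt har
  intro x
  have hrad : (r.toNNReal : ENNReal) ≤ (taylorSeries f x).radius := by
    refine (taylorSeries f x).le_radius_of_summable ?_
    simpa only [norm_taylorSeries, Real.coe_toNNReal _ hr.le, div_mul_eq_mul_div] using hsum x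
  have hf' : AnalyticOnNhd ℝ f (Metric.eball x r.toNNReal) :=
    (isOpen_univ.analyticOn_iff_analyticOnNhd.mp hf).mono (Set.subset_univ _)
  have hball := hf'.hasFPowerSeriesOnBall_taylorSeries (by simpa using hr) hrad
  have ha : a ∈ Metric.eball (0 : ℝ) r.toNNReal := by
    rwa [Metric.eball_coe, mem_ball_zero_iff, Real.norm_eq_abs, Real.coe_toNNReal _ hr.le]
  rw [← (hball.hasSum ha).tsum_eq]
  refine tsum_congr fun n ↦ ?_
  rw [taylorSeries_apply_diag, Complex.real_smul, div_eq_mul_inv]
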